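/- Let P = Q' ⊕ a ⊕ b ⊕ Q'' + P_2 and P' = P with the covering relation a ≺ b removed. For π ∈ L(P), let π̂ ∈ L(P') be obtained by interchanging a and b. Then L(P') = {π, π̂ : π ∈ L(P)}, so |L(P')| = 2|L(P)|. Moreover in the promotion graphs: (1) if k ≺_P a and π →^{x_k} π̃ in G_P, then π →^{x_k} π̃̂ and π̂ →^{x_k} π̃ in G_{P'}; (2) if k ⪯̸_P a,b and π →^{x_k} π̃ in G_P, then π →^{x_k} π̃ and π̂ →^{x_k} π̃̂ in G_{P'}; (3) if π →^{x_a} π̃ in G_P, then π →^{x_a} π̃̂ and π̂ →^{x_b} π̃ in G_{P'}; (4) if π →^{x_b} π̃ in G_P, then π →^{x_b} π̃ and π̂ →^{x_a} π̃̂ in G_{P'}. -/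

import Mathlib

open Matrix Kronecker
open scoped Classical

namespace PromoMC

/-- A listing of the elements of a finite set `α`. -/
abbrev Listing (α : Type*) [Fintype α] := Fin (Fintype.card α) ≃ α

/-- `π` is a linear extension of the poset `α`: `π i < π j` in `α` implies `i < j`. -/
def IsLinExt {α : Type*} [Fintype α] [PartialOrder α] (π : Listing α) : Prop :=
  ∀ i j, π i < π j → i < j

variable {α : Type*} [Fintype α] [PartialOrder α]

/-- The operator `τ_i`: swap positions `i` and `i+1` (0-indexed) of a listing when
the corresponding entries are incomparable. -/
noncomputable def tau (i : ℕ) (π : Listing α) : Listing α :=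
  if h : i + 1 < Fintype.card α then
    if ¬ π ⟨i, by omega⟩ ≤ π ⟨i + 1, h⟩ ∧ ¬ π ⟨i + 1, h⟩ ≤ π ⟨i, by omega⟩ then
      (Equiv.swap (⟨i, by omega⟩ : Fin (Fintype.card α)) ⟨i + 1, h⟩).trans π
    else π
  else π

/-- The extended promotion operator `∂_i = τ_{n-1} ⋯ τ_{i+1} τ_i` (0-indexed). -/
noncomputable def promo (i : ℕ) (π : Listing α) : Listing α :=
  ((List.range (Fintype.card α)).drop i).foldl (fun σ j => tau j σ) π

/-- The set of linear extensions of a finite poset. -/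
def LinExt (α : Type*) [Fintype α] [PartialOrder α] := {π : Listing α // IsLinExt π}

noncomputable instance : Fintype (LinExt α) := by unfold LinExt; infer_instance

noncomputable instance : DecidableEq (LinExt α) := Classical.decEq _

/-- The transition matrix of the promotion Markov chain: the `(π, π')` entry is the
sum of `x (π i)` over all positions `i` with `∂_i π = π'`. -/
noncomputable def promoMatrix (x : α → ℝ) : Matrix (LinExt α) (LinExt α) ℝ :=
  fun π π' => ∑ i : Fin (Fintype.card α), if promo (i : ℕ) π.1 = π'.1 then x (π.1 i) else 0

/-- A discrete (antichain) order on a type. -/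
def Discrete (β : Type*) := β

instance {β : Type*} : PartialOrder (Discrete β) where
  le a b := a = b
  le_refl _ := rfl
  le_trans _ _ _ h h' := Eq.trans h h'
  le_antisymm _ _ h _ := h

instance {β : Type*} [Fintype β] : Fintype (Discrete β) := inferInstanceAs (Fintype β)
instance {β : Type*} [DecidableEq β] : DecidableEq (Discrete β) := inferInstanceAs (DecidableEq β)

instance {β γ : Type*} [Fintype β] [Fintype γ] : Fintype (β ⊕ₗ γ) :=
  inferInstanceAs (Fintype (β ⊕ γ))

/-- A ladder with `k` levels, the `i`-th level an antichain of size `(q i) + 1 ∈ {1, 2}`. -/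
def Ladder (k : ℕ) (q : Fin k → Fin 2) := Σ i : Fin k, Fin ((q i : ℕ) + 1)

instance {k : ℕ} {q : Fin k → Fin 2} : Fintype (Ladder k q) :=
  inferInstanceAs (Fintype (Σ i : Fin k, Fin ((q i : ℕ) + 1)))

instance {k : ℕ} {q : Fin k → Fin 2} : DecidableEq (Ladder k q) :=
  inferInstanceAs (DecidableEq (Σ i : Fin k, Fin ((q i : ℕ) + 1)))

instance {k : ℕ} {q : Fin k → Fin 2} : PartialOrder (Ladder k q) where
  le a b := a.1 < b.1 ∨ a = b
  le_refl _ := Or.inr rfl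
  le_trans := by
    rintro a b c (h | rfl) (h' | rfl)
    · exact Or.inl (h.trans h')
    · exact Or.inl h
    · exact Or.inl h'
    · exact Or.inr rfl
  le_antisymm := by
    rintro a b (h | rfl) (h' | h2)
    · exact ((lt_asymm h) h').elim
    · exact h2.symm
    · rfl
    · rfl

/-- A rooted forest: every element is covered by at most one element
(has at most one successor). -/
def IsRootedForest (α : Type*) [PartialOrder α] : Prop :=
  ∀ a b c : α, a ⋖ b → a ⋖ c → b = c

/-- A finite poset is a ladder if it is order-isomorphic to some `Ladder k q`. -/
def IsLadder (α : Type*) [Fintype α] [PartialOrder α] : Prop :=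
  ∃ (k : ℕ) (q : Fin k → Fin 2), Nonempty (α ≃o Ladder k q)

variable (Q' Q'' P2 : Type) [Fintype Q'] [PartialOrder Q'] [Fintype Q'']
  [PartialOrder Q''] [Fintype P2] [PartialOrder P2]

/-- The common carrier of the posets `P = Q' ⊕ a ⊕ b ⊕ Q'' + P₂` and
`P' = Q' ⊕ {a, b} ⊕ Q'' + P₂`, with `a = false`, `b = true` in the middle. -/
def Gam := (Q' ⊕ (Bool ⊕ Q'')) ⊕ P2

instance : Fintype (Gam Q' Q'' P2) :=
  inferInstanceAs (Fintype ((Q' ⊕ (Bool ⊕ Q'')) ⊕ P2))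

/-- The order of `P = Q' ⊕ a ⊕ b ⊕ Q'' + P₂` (the middle `Bool` is ordered,
`a = false ≺ b = true`). -/
noncomputable def Pord : PartialOrder (Gam Q' Q'' P2) :=
  inferInstanceAs (PartialOrder ((Q' ⊕ₗ (Bool ⊕ₗ Q'')) ⊕ P2))

/-- The order of `P' = P \ {(a,b)}`: the middle `Bool` is an antichain. -/
noncomputable def P'ord : PartialOrder (Gam Q' Q'' P2) :=
  inferInstanceAs (PartialOrder ((Q' ⊕ₗ (Discrete Bool ⊕ₗ Q'')) ⊕ P2))

/-- The element `a`. -/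
def aE : Gam Q' Q'' P2 := Sum.inl (Sum.inr (Sum.inl false))

/-- The element `b`. -/
def bE : Gam Q' Q'' P2 := Sum.inl (Sum.inr (Sum.inl true))

/-- `π̂`: the listing obtained from `π` by interchanging `a` and `b`. -/
noncomputable def hatL (π : Listing (Gam Q' Q'' P2)) : Listing (Gam Q' Q'' P2) :=
  π.trans (Equiv.swap (aE Q' Q'' P2) (bE Q' Q'' P2))

/-- `≤` in `P`. -/
noncomputable def leP (u w : Gam Q' Q'' P2) : Prop :=
  @LE.le _ (Pord Q' Q'' P2).toPreorder.toLE u w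

/-- `<` in `P`. -/
noncomputable def ltP (u w : Gam Q' Q'' P2) : Prop :=
  @LT.lt _ (Pord Q' Q'' P2).toPreorder.toLT u w

/-- linear extension of `P`. -/
noncomputable def linP (π : Listing (Gam Q' Q'' P2)) : Prop :=
  @IsLinExt _ _ (Pord Q' Q'' P2) π

/-- linear extension of `P'`. -/
noncomputable def linP' (π : Listing (Gam Q' Q'' P2)) : Prop :=
  @IsLinExt _ _ (P'ord Q' Q'' P2) π

/-- promotion `∂_i` in `P`. -/
noncomputable def promP (i : ℕ) (π : Listing (Gam Q' Q'' P2)) : Listing (Gam Q' Q'' P2) :=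
  @promo _ _ (Pord Q' Q'' P2) i π

/-- promotion `∂_i` in `P'`. -/
noncomputable def promP' (i : ℕ) (π : Listing (Gam Q' Q'' P2)) : Listing (Gam Q' Q'' P2) :=
  @promo _ _ (P'ord Q' Q'' P2) i π


/-!
The orders `P` and `P'` differ only in the comparability of `a` and `b`, and `τ_j` only asks
whether two adjacent entries are comparable. So a run of `∂_i` in `P'` agrees step by step with
the run in `P` until `a` is the moving entry and `b` comes next: there `P` stops while `P'`
interchanges them. From then on the two runs differ exactly by the transposition `(a b)`, because
`(a b)` is an automorphism of `P'` and turns the comparabilities of `b` in `P` into those of `a`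
in `P'`. Which case occurs is read off from the moving entry. If it lies below `a`, it is only
ever handed on to entries below `a` (everything between it and `a` is below `a` or incomparable to
`a`) until `a` itself moves, and `a` then slides past entries incomparable to it up to `b`. If it
is incomparable to `a` it stays so, and if `a` is already to its left, `a` is never touched; in
both cases the two runs coincide. Of the shape `Q' ⊕ a ⊕ b ⊕ Q'' + P₂` only two features are used:
everything above `a` is above `b`, and the elements comparable to `a` form a union of connected
components of the comparability graph.

The linear extensions of `P` are those of `P'` with `a` before `b`, hence `L(P')` is the disjoint
union of `L(P)` and its image under `π ↦ π̂`.
-/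

section Promotion

variable {β : Type*} [Fintype β]

theorem isLinExt_iff_symm (O : PartialOrder β) (π : Listing β) :
    @IsLinExt β _ O π ↔ ∀ u v, O.lt u v → (π.symm u : ℕ) < π.symm v := by
  refine ⟨fun h u v huv => h _ _ (by simpa using huv), fun h i j hij => ?_⟩
  simpa using h _ _ hij

theorem tau_of_card_le (O : PartialOrder β) {j : ℕ} (π : Listing β)
    (h : Fintype.card β ≤ j + 1) : @tau β _ O j π = π := by
  unfold tau
  rw [dif_neg (by omega)]

theorem tau_eq_ite (O : PartialOrder β) {j : ℕ} {π : Listing β} {u v : β}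
    (hu : (π.symm u : ℕ) = j) (hv : (π.symm v : ℕ) = j + 1) :
    @tau β _ O j π = if IncompRel O.le u v then π.trans (Equiv.swap u v) else π := by
  have h : j + 1 < Fintype.card β := hv ▸ (π.symm v).isLt
  have hu' : π ⟨j, by omega⟩ = u := by rw [← π.apply_symm_apply u]; congr 1; ext; exact hu.symm
  have hv' : π ⟨j + 1, h⟩ = v := by rw [← π.apply_symm_apply v]; congr 1; ext; exact hv.symm
  unfold tau
  rw [dif_pos h]
  refine if_congr (by rw [hu', hv']; rfl) ?_ rfl
  ext k
  simp only [Equiv.trans_apply, ← hu', ← hv', π.injective.swap_apply]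

theorem tau_eq_ite_of_lt (O : PartialOrder β) {j : ℕ} (π : Listing β)
    (h : j + 1 < Fintype.card β) :
    @tau β _ O j π = if IncompRel O.le (π ⟨j, by omega⟩) (π ⟨j + 1, h⟩)
      then π.trans (Equiv.swap (π ⟨j, by omega⟩) (π ⟨j + 1, h⟩)) else π :=
  tau_eq_ite O (by simp) (by simp)

theorem tau_congr (O O' : PartialOrder β) {j : ℕ} {π : Listing β} {u v : β}
    (hu : (π.symm u : ℕ) = j) (hv : (π.symm v : ℕ) = j + 1)
    (h : IncompRel O.le u v ↔ IncompRel O'.le u v) : @tau β _ O j π = @tau β _ O' j π := by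
  rw [tau_eq_ite O hu hv, tau_eq_ite O' hu hv]
  exact if_congr h rfl rfl

theorem symm_tau_of_ne (O : PartialOrder β) {j : ℕ} (π : Listing β) {x : β}
    (hx : (π.symm x : ℕ) ≠ j) (hx' : (π.symm x : ℕ) ≠ j + 1) :
    (@tau β _ O j π).symm x = π.symm x := by
  by_cases h : j + 1 < Fintype.card β
  · rw [tau_eq_ite_of_lt O π h]
    split_ifs
    · rw [Equiv.symm_trans_apply, Equiv.symm_swap, Equiv.swap_apply_of_ne_of_ne] <;>
        rintro rfl <;> simp_all
    · rfl
  · rw [tau_of_card_le O π (by omega)]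

theorem IsLinExt.tau {O : PartialOrder β} {π : Listing β} (hπ : @IsLinExt β _ O π) (j : ℕ) :
    @IsLinExt β _ O (@tau β _ O j π) := by
  by_cases h : j + 1 < Fintype.card β
  · rw [tau_eq_ite_of_lt O π h]
    split_ifs with hc
    · rw [isLinExt_iff_symm] at hπ ⊢
      intro x y hxy
      have hne : ∀ z w, z ≠ w → (π.symm z : ℕ) ≠ π.symm w :=
        fun z w h e => h (π.symm.injective (Fin.ext e))
      have hlt := hπ x y hxy
      simp only [Equiv.symm_trans_apply, Equiv.symm_swap, Equiv.swap_apply_def]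
      split_ifs <;> subst_vars <;> grind [IncompRel]
    · exact hπ
  · rwa [tau_of_card_le O π (by omega)]

theorem tau_trans (O : PartialOrder β) {j : ℕ} (π : Listing β) (s : Equiv.Perm β)
    (hs : ∀ u v, IncompRel O.le (s u) (s v) ↔ IncompRel O.le u v) :
    @tau β _ O j (π.trans s) = (@tau β _ O j π).trans s := by
  by_cases h : j + 1 < Fintype.card β
  · have hu : ((π.trans s).symm (s (π ⟨j, by omega⟩)) : ℕ) = j := by simp
    have hv : ((π.trans s).symm (s (π ⟨j + 1, h⟩)) : ℕ) = j + 1 := by simp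
    rw [tau_eq_ite_of_lt O π h, tau_eq_ite O hu hv]
    simp only [hs]
    split_ifs
    · ext k
      simp [s.injective.swap_apply]
    · rfl
  · rw [tau_of_card_le O _ (by omega), tau_of_card_le O _ (by omega)]

theorem promo_of_card_le (O : PartialOrder β) {i : ℕ} (π : Listing β)
    (h : Fintype.card β ≤ i) : @promo β _ O i π = π := by
  unfold promo
  rw [List.drop_eq_nil_of_le (by simpa using h)]
  rfl

theorem promo_eq_promo_succ (O : PartialOrder β) {i : ℕ} (π : Listing β)
    (h : i < Fintype.card β) : @promo β _ O i π = @promo β _ O (i + 1) (@tau β _ O i π) := by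
  unfold promo
  rw [List.drop_eq_getElem_cons (by simpa using h), List.getElem_range, List.foldl_cons]

/-- The last step `τ_{n-1}` of a run is the identity, so the relation is only carried up to
index `n - 1`. -/
theorem promo_rel_of_tau_rel (O O' : PartialOrder β) (R : ℕ → Listing β → Listing β → Prop)
    (step : ∀ j π σ, j + 1 < Fintype.card β → R j π σ →
      R (j + 1) (@tau β _ O j π) (@tau β _ O' j σ))
    {i : ℕ} (hi : i < Fintype.card β) {π σ : Listing β} (h : R i π σ) :
    R (Fintype.card β - 1) (@promo β _ O i π) (@promo β _ O' i σ) := by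
  obtain ⟨k, hk⟩ : ∃ k, i + k = Fintype.card β - 1 := ⟨_, Nat.add_sub_of_le (by omega)⟩
  induction k generalizing i π σ with
  | zero =>
    have hn : Fintype.card β ≤ i + 1 := by omega
    rw [promo_eq_promo_succ _ _ hi, promo_eq_promo_succ _ _ hi, promo_of_card_le _ _ hn,
      promo_of_card_le _ _ hn, tau_of_card_le _ _ hn, tau_of_card_le _ _ hn]
    convert h using 1
    omega
  | succ k ih =>
    rw [promo_eq_promo_succ _ _ hi, promo_eq_promo_succ _ _ hi]
    exact ih (by omega) (step i π σ (by omega) h) (by omega)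

/-- State at position `j` of a run `π` in `P` and a run `σ` in `P'`: they differ by interchanging
`a` and `b`, and `a` lies left of the moving position. -/
def Swapped (a b : β) (j : ℕ) (π σ : Listing β) : Prop :=
  σ = π.trans (Equiv.swap a b) ∧ (π.symm a : ℕ) < j

/-- The two runs agree and `a` is the moving entry. -/
def MovingA (O : PartialOrder β) (a : β) (j : ℕ) (π σ : Listing β) : Prop :=
  σ = π ∧ @IsLinExt β _ O π ∧ (π.symm a : ℕ) = j

/-- The two runs agree and the moving entry lies below `a`. -/
def MovingBelowA (O : PartialOrder β) (a : β) (j : ℕ) (π σ : Listing β) : Prop :=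
  σ = π ∧ @IsLinExt β _ O π ∧ ∃ u, O.lt u a ∧ (π.symm u : ℕ) = j

end Promotion

/-- `O'` is `O` with the relation `a < b` deleted, and `a`, `b` are twins in `O'`. -/
structure CoverRemoval {β : Type*} (O O' : PartialOrder β) (a b : β) : Prop where
  le_iff : ∀ u v, O.le u v ↔ O'.le u v ∨ u = a ∧ v = b
  not_le : ¬ O'.le a b
  swap_le_swap : ∀ u v, O'.le (Equiv.swap a b u) (Equiv.swap a b v) ↔ O'.le u v

namespace CoverRemoval

variable {β : Type*} {O O' : PartialOrder β} {a b : β}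

theorem ne (hO : CoverRemoval O O' a b) : a ≠ b :=
  fun h => hO.not_le (h ▸ @le_refl β O'.toPreorder a)

theorem le_ab (hO : CoverRemoval O O' a b) : O.le a b :=
  (hO.le_iff a b).2 (Or.inr ⟨rfl, rfl⟩)

theorem lt_ab (hO : CoverRemoval O O' a b) : O.lt a b :=
  @lt_of_le_of_ne β O _ _ hO.le_ab hO.ne

theorem not_incompRel_ab (hO : CoverRemoval O O' a b) : ¬ IncompRel O.le a b :=
  fun h => h.1 hO.le_ab

theorem incompRel_ab' (hO : CoverRemoval O O' a b) : IncompRel O'.le a b :=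
  ⟨hO.not_le, fun h => hO.not_le (by simpa using (hO.swap_le_swap b a).2 h)⟩

theorem incompRel_iff {u v : β} (hO : CoverRemoval O O' a b) (h : ¬ (u = a ∧ v = b))
    (h' : ¬ (u = b ∧ v = a)) : IncompRel O.le u v ↔ IncompRel O'.le u v := by
  unfold IncompRel
  rw [hO.le_iff, hO.le_iff]
  tauto

theorem incompRel_swap (hO : CoverRemoval O O' a b) (u v : β) :
    IncompRel O'.le (Equiv.swap a b u) (Equiv.swap a b v) ↔ IncompRel O'.le u v := by
  simp only [IncompRel, hO.swap_le_swap]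

theorem lt_iff (hO : CoverRemoval O O' a b) (u v : β) :
    O.lt u v ↔ O'.lt u v ∨ u = a ∧ v = b := by
  rw [@lt_iff_le_and_ne β O, @lt_iff_le_and_ne β O', hO.le_iff]
  have := hO.ne
  grind

theorem swap_lt_swap (hO : CoverRemoval O O' a b) (u v : β) :
    O'.lt (Equiv.swap a b u) (Equiv.swap a b v) ↔ O'.lt u v := by
  rw [@lt_iff_le_not_ge β O'.toPreorder, @lt_iff_le_not_ge β O'.toPreorder, hO.swap_le_swap,
    hO.swap_le_swap]

variable [Fintype β]

theorem isLinExt_iff (hO : CoverRemoval O O' a b) (π : Listing β) :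
    @IsLinExt β _ O π ↔ @IsLinExt β _ O' π ∧ (π.symm a : ℕ) < π.symm b := by
  simp only [isLinExt_iff_symm, hO.lt_iff]
  refine ⟨fun h => ⟨fun u v huv => h u v (Or.inl huv), h a b (Or.inr ⟨rfl, rfl⟩)⟩, ?_⟩
  rintro ⟨h, hab⟩ u v (huv | ⟨rfl, rfl⟩)
  exacts [h u v huv, hab]

theorem isLinExt_trans_swap (hO : CoverRemoval O O' a b) {π : Listing β}
    (hπ : @IsLinExt β _ O' π) : @IsLinExt β _ O' (π.trans (Equiv.swap a b)) :=
  fun i j h => hπ i j ((hO.swap_lt_swap _ _).1 h)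

theorem isLinExt_trans_swap_iff (hO : CoverRemoval O O' a b) (π : Listing β) :
    @IsLinExt β _ O' (π.trans (Equiv.swap a b)) ↔ @IsLinExt β _ O' π := by
  refine ⟨fun h => ?_, hO.isLinExt_trans_swap⟩
  simpa [Equiv.trans_assoc] using hO.isLinExt_trans_swap h

theorem isLinExt'_iff (hO : CoverRemoval O O' a b) (σ : Listing β) :
    @IsLinExt β _ O' σ ↔ @IsLinExt β _ O σ ∨ @IsLinExt β _ O (σ.trans (Equiv.swap a b)) := by
  have hpos : (σ.symm a : ℕ) ≠ σ.symm b := fun h => hO.ne (σ.symm.injective (Fin.ext h))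
  simp only [hO.isLinExt_iff, hO.isLinExt_trans_swap_iff, Equiv.symm_trans_apply,
    Equiv.symm_swap, Equiv.swap_apply_left, Equiv.swap_apply_right]
  have : (σ.symm a : ℕ) < σ.symm b ∨ (σ.symm b : ℕ) < σ.symm a := by omega
  tauto

theorem isLinExt'_iff_exists (hO : CoverRemoval O O' a b) (σ : Listing β) :
    @IsLinExt β _ O' σ ↔
      ∃ π : Listing β, @IsLinExt β _ O π ∧ (σ = π ∨ σ = π.trans (Equiv.swap a b)) := by
  rw [hO.isLinExt'_iff]
  constructor
  · rintro (h | h)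
    exacts [⟨σ, h, Or.inl rfl⟩, ⟨_, h, Or.inr (by simp [Equiv.trans_assoc])⟩]
  · rintro ⟨π, hπ, rfl | rfl⟩
    exacts [Or.inl hπ, Or.inr (by simpa [Equiv.trans_assoc])]

theorem card_isLinExt' (hO : CoverRemoval O O' a b) :
    Nat.card {σ : Listing β // @IsLinExt β _ O' σ}
      = 2 * Nat.card {π : Listing β // @IsLinExt β _ O π} := by
  have hdisj : Disjoint (@IsLinExt β _ O)
      (fun σ => @IsLinExt β _ O (σ.trans (Equiv.swap a b))) := by
    refine Pi.disjoint_iff.2 fun σ => disjoint_iff_inf_le.2 fun ⟨h, h'⟩ => ?_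
    have := ((hO.isLinExt_iff _).1 h).2
    have := ((hO.isLinExt_iff _).1 h').2
    simp only [Equiv.symm_trans_apply, Equiv.symm_swap, Equiv.swap_apply_left,
      Equiv.swap_apply_right] at this
    omega
  have hswap : {σ : Listing β // @IsLinExt β _ O (σ.trans (Equiv.swap a b))}
      ≃ {π : Listing β // @IsLinExt β _ O π} :=
    ((Equiv.refl _).equivCongr (Equiv.swap a b)).subtypeEquiv fun _ => Iff.rfl
  rw [Nat.card_eq_fintype_card, Nat.card_eq_fintype_card,
    Fintype.card_congr (Equiv.subtypeEquivRight hO.isLinExt'_iff),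
    Fintype.card_subtype_or_disjoint _ _ hdisj, Fintype.card_congr hswap, two_mul]

theorem tau_eq_tau {j : ℕ} {π : Listing β} {u v : β} (hO : CoverRemoval O O' a b)
    (hu : (π.symm u : ℕ) = j) (hv : (π.symm v : ℕ) = j + 1)
    (h : ¬ (u = a ∧ v = b)) (h' : ¬ (u = b ∧ v = a)) : @tau β _ O' j π = @tau β _ O j π :=
  (tau_congr O O' hu hv (hO.incompRel_iff h h')).symm

theorem tau_eq_of_symm_lt {j : ℕ} {π : Listing β} (hO : CoverRemoval O O' a b)
    (h1 : j + 1 < Fintype.card β) (ha : (π.symm a : ℕ) < j) :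
    @tau β _ O' j π = @tau β _ O j π := by
  have hu : (π.symm (π ⟨j, by omega⟩) : ℕ) = j := by simp
  have hv : (π.symm (π ⟨j + 1, h1⟩) : ℕ) = j + 1 := by simp
  exact hO.tau_eq_tau hu hv (fun h => by rw [h.1] at hu; omega) (fun h => by rw [h.2] at hv; omega)

theorem swapped_step {j : ℕ} {π σ : Listing β} (hO : CoverRemoval O O' a b)
    (h1 : j + 1 < Fintype.card β) (h : Swapped a b j π σ) :
    Swapped a b (j + 1) (@tau β _ O j π) (@tau β _ O' j σ) := by
  obtain ⟨rfl, ha⟩ := h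
  refine ⟨by rw [tau_trans O' π _ hO.incompRel_swap, hO.tau_eq_of_symm_lt h1 ha], ?_⟩
  rw [symm_tau_of_ne O π (by omega) (by omega)]
  omega

theorem movingA_step {j : ℕ} {π σ : Listing β} (hO : CoverRemoval O O' a b)
    (hcov : ∀ x, O.lt a x → O.le b x) (h1 : j + 1 < Fintype.card β) (h : MovingA O a j π σ) :
    MovingA O a (j + 1) (@tau β _ O j π) (@tau β _ O' j σ) ∨
      Swapped a b (j + 1) (@tau β _ O j π) (@tau β _ O' j σ) := by
  -- `O'` is a local instance too; make `O` the order that instance search finds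
  let _ : PartialOrder β := O
  obtain ⟨hσ, hπ, ha⟩ := h
  rw [hσ]
  have hlin := (isLinExt_iff_symm O π).1 hπ
  obtain ⟨v, hv⟩ : ∃ v, (π.symm v : ℕ) = j + 1 := ⟨π ⟨j + 1, h1⟩, by simp⟩
  by_cases hvb : v = b
  · subst hvb
    rw [tau_eq_ite O ha hv, tau_eq_ite O' ha hv, if_neg hO.not_incompRel_ab,
      if_pos hO.incompRel_ab']
    exact Or.inr ⟨rfl, by omega⟩
  · have hab := hlin _ _ hO.lt_ab
    have hinc : IncompRel O.le a v := by
      refine ⟨fun hav => ?_, fun hva => ?_⟩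
      · have := hlin _ _ ((hcov v (hav.lt_of_ne (by rintro rfl; omega))).lt_of_ne (Ne.symm hvb))
        omega
      · have := hlin _ _ (hva.lt_of_ne (by rintro rfl; omega))
        omega
    refine Or.inl ⟨hO.tau_eq_tau ha hv (fun h => hvb h.2) (fun h => hO.ne h.1), hπ.tau j, ?_⟩
    rw [tau_eq_ite O ha hv, if_pos hinc]
    simpa

theorem movingA_or_swapped_step {j : ℕ} {π σ : Listing β} (hO : CoverRemoval O O' a b)
    (hcov : ∀ x, O.lt a x → O.le b x) (h1 : j + 1 < Fintype.card β)
    (h : MovingA O a j π σ ∨ Swapped a b j π σ) :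
    MovingA O a (j + 1) (@tau β _ O j π) (@tau β _ O' j σ) ∨
      Swapped a b (j + 1) (@tau β _ O j π) (@tau β _ O' j σ) :=
  h.elim (hO.movingA_step hcov h1) fun h => Or.inr (hO.swapped_step h1 h)

theorem movingBelowA_step {j : ℕ} {π σ : Listing β} (hO : CoverRemoval O O' a b)
    (hcomp : ∀ u v, Relation.SymmGen O.le u v → Relation.SymmGen O.le v a →
      Relation.SymmGen O.le u a)
    (h1 : j + 1 < Fintype.card β) (h : MovingBelowA O a j π σ) :
    MovingBelowA O a (j + 1) (@tau β _ O j π) (@tau β _ O' j σ) ∨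
      MovingA O a (j + 1) (@tau β _ O j π) (@tau β _ O' j σ) := by
  let _ : PartialOrder β := O
  obtain ⟨hσ, hπ, u, hua, hu⟩ := h
  rw [hσ]
  have hlin := (isLinExt_iff_symm O π).1 hπ
  obtain ⟨v, hv⟩ : ∃ v, (π.symm v : ℕ) = j + 1 := ⟨π ⟨j + 1, h1⟩, by simp⟩
  have hτ : @tau β _ O' j π = @tau β _ O j π :=
    hO.tau_eq_tau hu hv (fun h => hua.ne h.1) (fun h => (h.1 ▸ hua).not_gt hO.lt_ab)
  have hpos := hlin _ _ hua
  by_cases hva : v = a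
  · subst hva
    rw [hτ, tau_eq_ite O hu hv, if_neg fun hc => hc.1 hua.le]
    exact Or.inr ⟨rfl, hπ, hv⟩
  · refine Or.inl ⟨hτ, hπ.tau j, ?_⟩
    rw [tau_eq_ite O hu hv]
    split_ifs with hc
    · exact ⟨u, hua, by simpa⟩
    · refine ⟨v, ?_, hv⟩
      rcases hcomp v u (not_incompRel_iff_symmGen.1 hc).symm (.of_rel hua.le) with hva' | hav
      · exact hva'.lt_of_ne hva
      · have := hlin _ _ (hav.lt_of_ne (Ne.symm hva))
        omega

theorem eq_trans_swap_of_movingA_or_swapped {π σ : Listing β} (hO : CoverRemoval O O' a b)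
    (h : MovingA O a (Fintype.card β - 1) π σ ∨ Swapped a b (Fintype.card β - 1) π σ) :
    σ = π.trans (Equiv.swap a b) := by
  rcases h with ⟨-, hπ, ha⟩ | h
  · have := (isLinExt_iff_symm O _).1 hπ a b hO.lt_ab
    omega
  · exact h.1

theorem promo_eq_of_symm_lt {i : ℕ} {π : Listing β} (hO : CoverRemoval O O' a b)
    (hi : i < Fintype.card β) (ha : (π.symm a : ℕ) < i) :
    @promo β _ O' i π = @promo β _ O i π := by
  refine (promo_rel_of_tau_rel O O' (fun j π σ => σ = π ∧ (π.symm a : ℕ) < j) ?_ hi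
    ⟨rfl, ha⟩).1
  rintro j ρ σ h1 ⟨hσ, ha⟩
  rw [hσ]
  refine ⟨hO.tau_eq_of_symm_lt h1 ha, ?_⟩
  rw [symm_tau_of_ne O _ (by omega) (by omega)]
  omega

theorem promo_eq_of_not_symmGen {π : Listing β} {u : β} (hO : CoverRemoval O O' a b)
    (hcomp : ∀ u v, Relation.SymmGen O.le u v → Relation.SymmGen O.le v a →
      Relation.SymmGen O.le u a)
    (hu : ¬ Relation.SymmGen O.le u a) :
    @promo β _ O' (π.symm u) π = @promo β _ O (π.symm u) π := by
  let R : ℕ → Listing β → Listing β → Prop := fun j π σ =>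
    σ = π ∧ ∃ u, ¬ Relation.SymmGen O.le u a ∧ (π.symm u : ℕ) = j
  refine (promo_rel_of_tau_rel O O' R ?_ (π.symm u).isLt ⟨rfl, u, hu, rfl⟩).1
  rintro j ρ σ h1 ⟨hσ, u, hu, hpos⟩
  rw [hσ]
  obtain ⟨v, hv⟩ : ∃ v, (ρ.symm v : ℕ) = j + 1 := ⟨ρ ⟨j + 1, h1⟩, by simp⟩
  have hua : u ≠ a := by rintro rfl; exact hu (.of_rel (@le_refl β O.toPreorder u))
  have hub : u ≠ b := by rintro rfl; exact hu (.of_rel_symm hO.le_ab)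
  refine ⟨hO.tau_eq_tau hpos hv (fun h => hua h.1) (fun h => hub h.1), ?_⟩
  rw [tau_eq_ite O hpos hv]
  split_ifs with hc
  · exact ⟨u, hu, by simpa⟩
  · exact ⟨v, fun hva => hu (hcomp u v (not_incompRel_iff_symmGen.1 hc) hva), hv⟩

theorem promo_symm_a_eq {π : Listing β} (hO : CoverRemoval O O' a b)
    (hcov : ∀ x, O.lt a x → O.le b x) (hπ : @IsLinExt β _ O π) :
    @promo β _ O' (π.symm a) π = (@promo β _ O (π.symm a) π).trans (Equiv.swap a b) :=
  hO.eq_trans_swap_of_movingA_or_swapped <|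
    promo_rel_of_tau_rel O O' (fun j π σ => MovingA O a j π σ ∨ Swapped a b j π σ)
      (fun _ _ _ => hO.movingA_or_swapped_step hcov) (π.symm a).isLt (Or.inl ⟨rfl, hπ, rfl⟩)

theorem promo_symm_eq_of_lt_a {π : Listing β} {κ : β} (hO : CoverRemoval O O' a b)
    (hcov : ∀ x, O.lt a x → O.le b x)
    (hcomp : ∀ u v, Relation.SymmGen O.le u v → Relation.SymmGen O.le v a →
      Relation.SymmGen O.le u a)
    (hπ : @IsLinExt β _ O π) (hκ : O.lt κ a) :
    @promo β _ O' (π.symm κ) π = (@promo β _ O (π.symm κ) π).trans (Equiv.swap a b) := by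
  let R : ℕ → Listing β → Listing β → Prop := fun j π σ =>
    MovingBelowA O a j π σ ∨ MovingA O a j π σ ∨ Swapped a b j π σ
  have step : ∀ j π σ, j + 1 < Fintype.card β → R j π σ →
      R (j + 1) (@tau β _ O j π) (@tau β _ O' j σ) := by
    rintro j π σ h1 (h | h)
    · exact (hO.movingBelowA_step hcomp h1 h).imp_right Or.inl
    · exact Or.inr (hO.movingA_or_swapped_step hcov h1 h)
  rcases promo_rel_of_tau_rel O O' R step (π.symm κ).isLt (Or.inl ⟨rfl, hπ, κ, hκ, rfl⟩) with
    ⟨-, hπ', u, hua, hu⟩ | h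
  · have := (isLinExt_iff_symm O _).1 hπ' u a hua
    omega
  · exact hO.eq_trans_swap_of_movingA_or_swapped h

theorem promo_trans_swap {i : ℕ} (hO : CoverRemoval O O' a b) (hi : i < Fintype.card β)
    (π : Listing β) :
    @promo β _ O' i (π.trans (Equiv.swap a b))
      = (@promo β _ O' i π).trans (Equiv.swap a b) :=
  promo_rel_of_tau_rel O' O' (fun _ π σ => σ = π.trans (Equiv.swap a b))
    (fun _ π _ _ h => h ▸ tau_trans O' π _ hO.incompRel_swap) hi rfl

theorem promo_trans_swap_symm (hO : CoverRemoval O O' a b) (π : Listing β) (x : β) :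
    @promo β _ O' ((π.trans (Equiv.swap a b)).symm x) (π.trans (Equiv.swap a b))
      = (@promo β _ O' (π.symm (Equiv.swap a b x)) π).trans (Equiv.swap a b) := by
  rw [Equiv.symm_trans_apply, Equiv.symm_swap]
  exact hO.promo_trans_swap (Fin.isLt _) π

theorem edges_of_lt_a {π : Listing β} {κ : β} (hO : CoverRemoval O O' a b)
    (hcov : ∀ x, O.lt a x → O.le b x)
    (hcomp : ∀ u v, Relation.SymmGen O.le u v → Relation.SymmGen O.le v a →
      Relation.SymmGen O.le u a)
    (hπ : @IsLinExt β _ O π) (hκ : O.lt κ a) :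
    @promo β _ O' (π.symm κ) π = (@promo β _ O (π.symm κ) π).trans (Equiv.swap a b) ∧
      @promo β _ O' ((π.trans (Equiv.swap a b)).symm κ) (π.trans (Equiv.swap a b))
        = @promo β _ O (π.symm κ) π := by
  have h := hO.promo_symm_eq_of_lt_a hcov hcomp hπ hκ
  have hκa : κ ≠ a := @ne_of_lt β O.toPreorder _ _ hκ
  have hκb : κ ≠ b := by
    rintro rfl
    exact @lt_asymm β O.toPreorder _ _ hκ hO.lt_ab
  refine ⟨h, ?_⟩
  rw [hO.promo_trans_swap_symm, Equiv.swap_apply_of_ne_of_ne hκa hκb, h]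
  simp [Equiv.trans_assoc]

theorem edges_of_not_le {π : Listing β} {κ : β} (hO : CoverRemoval O O' a b)
    (hcomp : ∀ u v, Relation.SymmGen O.le u v → Relation.SymmGen O.le v a →
      Relation.SymmGen O.le u a)
    (hπ : @IsLinExt β _ O π) (h1 : ¬ O.le κ a) (h2 : ¬ O.le κ b) :
    @promo β _ O' (π.symm κ) π = @promo β _ O (π.symm κ) π ∧
      @promo β _ O' ((π.trans (Equiv.swap a b)).symm κ) (π.trans (Equiv.swap a b))
        = (@promo β _ O (π.symm κ) π).trans (Equiv.swap a b) := by
  have hκa : κ ≠ a := by rintro rfl; exact h1 (@le_refl β O.toPreorder _)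
  have hκb : κ ≠ b := by rintro rfl; exact h2 (@le_refl β O.toPreorder _)
  have h : @promo β _ O' (π.symm κ) π = @promo β _ O (π.symm κ) π := by
    by_cases hc : Relation.SymmGen O.le κ a
    · have hak : O.lt a κ := @lt_of_le_of_ne β O _ _ (hc.resolve_left h1) (Ne.symm hκa)
      exact hO.promo_eq_of_symm_lt (Fin.isLt _) ((isLinExt_iff_symm O π).1 hπ a κ hak)
    · exact hO.promo_eq_of_not_symmGen hcomp hc
  refine ⟨h, ?_⟩
  rw [hO.promo_trans_swap_symm, Equiv.swap_apply_of_ne_of_ne hκa hκb, h]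

theorem edges_a {π : Listing β} (hO : CoverRemoval O O' a b)
    (hcov : ∀ x, O.lt a x → O.le b x) (hπ : @IsLinExt β _ O π) :
    @promo β _ O' (π.symm a) π = (@promo β _ O (π.symm a) π).trans (Equiv.swap a b) ∧
      @promo β _ O' ((π.trans (Equiv.swap a b)).symm b) (π.trans (Equiv.swap a b))
        = @promo β _ O (π.symm a) π := by
  have h := hO.promo_symm_a_eq hcov hπ
  refine ⟨h, ?_⟩
  rw [hO.promo_trans_swap_symm, Equiv.swap_apply_right, h]
  simp [Equiv.trans_assoc]

theorem edges_b {π : Listing β} (hO : CoverRemoval O O' a b) (hπ : @IsLinExt β _ O π) :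
    @promo β _ O' (π.symm b) π = @promo β _ O (π.symm b) π ∧
      @promo β _ O' ((π.trans (Equiv.swap a b)).symm a) (π.trans (Equiv.swap a b))
        = (@promo β _ O (π.symm b) π).trans (Equiv.swap a b) := by
  have h := hO.promo_eq_of_symm_lt (Fin.isLt _) ((isLinExt_iff_symm O π).1 hπ a b hO.lt_ab)
  refine ⟨h, ?_⟩
  rw [hO.promo_trans_swap_symm, Equiv.swap_apply_left, h]

end CoverRemoval

theorem Pord_le_iff (Q' Q'' P2 : Type) [PartialOrder Q'] [PartialOrder Q''] [PartialOrder P2]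
    (u v : Gam Q' Q'' P2) : (Pord Q' Q'' P2).le u v ↔
      Sum.LiftRel (Sum.Lex (· ≤ ·) (Sum.Lex (· ≤ ·) (· ≤ ·))) (· ≤ ·) u v :=
  Iff.rfl

theorem P'ord_le_iff (Q' Q'' P2 : Type) [PartialOrder Q'] [PartialOrder Q''] [PartialOrder P2]
    (u v : Gam Q' Q'' P2) : (P'ord Q' Q'' P2).le u v ↔
      Sum.LiftRel (Sum.Lex (· ≤ ·) (Sum.Lex (· = ·) (· ≤ ·))) (· ≤ ·) u v :=
  Iff.rfl

theorem coverRemoval_Pord (Q' Q'' P2 : Type) [PartialOrder Q'] [PartialOrder Q'']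
    [PartialOrder P2] :
    CoverRemoval (Pord Q' Q'' P2) (P'ord Q' Q'' P2) (aE Q' Q'' P2) (bE Q' Q'' P2) where
  le_iff u v := by
    rw [Pord_le_iff, P'ord_le_iff]
    -- `simp` can only tell elements of `Gam` apart once `Gam` is unfolded
    rcases u with ((x | (c | y)) | z) <;> rcases v with ((x' | (c' | y')) | z') <;>
      simp [aE, bE, Gam]
    revert c c'
    decide
  not_le := by
    rw [P'ord_le_iff]
    simp [aE, bE]
  swap_le_swap u v := by
    rw [P'ord_le_iff, P'ord_le_iff, Equiv.swap_apply_def, Equiv.swap_apply_def]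
    rcases u with ((x | ((_ | _) | y)) | z) <;> rcases v with ((x' | ((_ | _) | y')) | z') <;>
      simp [aE, bE, Gam]

theorem Pord_le_of_aE_lt (Q' Q'' P2 : Type) [PartialOrder Q'] [PartialOrder Q'']
    [PartialOrder P2] (x : Gam Q' Q'' P2) (h : (Pord Q' Q'' P2).lt (aE Q' Q'' P2) x) :
    (Pord Q' Q'' P2).le (bE Q' Q'' P2) x := by
  rw [@lt_iff_le_and_ne _ (Pord Q' Q'' P2), Pord_le_iff] at h
  rw [Pord_le_iff]
  rcases x with ((x | (c | y)) | z) <;> simp_all [aE, bE, Gam]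

theorem symmGen_Pord_aE (Q' Q'' P2 : Type) [PartialOrder Q'] [PartialOrder Q'']
    [PartialOrder P2] (u v : Gam Q' Q'' P2)
    (huv : Relation.SymmGen (Pord Q' Q'' P2).le u v)
    (hv : Relation.SymmGen (Pord Q' Q'' P2).le v (aE Q' Q'' P2)) :
    Relation.SymmGen (Pord Q' Q'' P2).le u (aE Q' Q'' P2) := by
  unfold Relation.SymmGen at *
  simp only [Pord_le_iff] at *
  rcases u with ((x | (c | y)) | z) <;> rcases v with ((x' | (c' | y')) | z') <;>
    simp_all [aE]

/-- Let `P = Q' ⊕ a ⊕ b ⊕ Q'' + P₂` and `P'` be `P` with the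
covering relation `a ≺ b` removed.  Then `L(P') = {π, π̂ : π ∈ L(P)}` where `π̂`
interchanges `a` and `b`, so `|L(P')| = 2|L(P)|`; and the promotion graphs are
related by: (1) for `k ≺_P a`, `π →^{x_k} π̃` in `G_P` gives `π →^{x_k} π̃̂` and
`π̂ →^{x_k} π̃` in `G_{P'}`; (2) for `k ⪯̸_P a, b`, it gives `π →^{x_k} π̃` and
`π̂ →^{x_k} π̃̂`; (3) `π →^{x_a} π̃` gives `π →^{x_a} π̃̂` and `π̂ →^{x_b} π̃`;
(4) `π →^{x_b} π̃` gives `π →^{x_b} π̃` and `π̂ →^{x_a} π̃̂`. -/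
theorem stmt19 :
    (∀ σ : Listing (Gam Q' Q'' P2),
      linP' Q' Q'' P2 σ ↔
        ∃ π : Listing (Gam Q' Q'' P2), linP Q' Q'' P2 π ∧
          (σ = π ∨ σ = hatL Q' Q'' P2 π)) ∧
    Nat.card {σ : Listing (Gam Q' Q'' P2) // linP' Q' Q'' P2 σ}
      = 2 * Nat.card {π : Listing (Gam Q' Q'' P2) // linP Q' Q'' P2 π} ∧
    (∀ π : Listing (Gam Q' Q'' P2), linP Q' Q'' P2 π →
      (∀ κ : Gam Q' Q'' P2, ltP Q' Q'' P2 κ (aE Q' Q'' P2) →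
        promP' Q' Q'' P2 (π.symm κ) π
            = hatL Q' Q'' P2 (promP Q' Q'' P2 (π.symm κ) π) ∧
        promP' Q' Q'' P2 ((hatL Q' Q'' P2 π).symm κ) (hatL Q' Q'' P2 π)
            = promP Q' Q'' P2 (π.symm κ) π) ∧
      (∀ κ : Gam Q' Q'' P2,
        ¬ leP Q' Q'' P2 κ (aE Q' Q'' P2) → ¬ leP Q' Q'' P2 κ (bE Q' Q'' P2) →
        promP' Q' Q'' P2 (π.symm κ) π = promP Q' Q'' P2 (π.symm κ) π ∧
        promP' Q' Q'' P2 ((hatL Q' Q'' P2 π).symm κ) (hatL Q' Q'' P2 π)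
            = hatL Q' Q'' P2 (promP Q' Q'' P2 (π.symm κ) π)) ∧
      (promP' Q' Q'' P2 (π.symm (aE Q' Q'' P2)) π
          = hatL Q' Q'' P2 (promP Q' Q'' P2 (π.symm (aE Q' Q'' P2)) π) ∧
       promP' Q' Q'' P2 ((hatL Q' Q'' P2 π).symm (bE Q' Q'' P2)) (hatL Q' Q'' P2 π)
          = promP Q' Q'' P2 (π.symm (aE Q' Q'' P2)) π) ∧
      (promP' Q' Q'' P2 (π.symm (bE Q' Q'' P2)) π
          = promP Q' Q'' P2 (π.symm (bE Q' Q'' P2)) π ∧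
       promP' Q' Q'' P2 ((hatL Q' Q'' P2 π).symm (aE Q' Q'' P2)) (hatL Q' Q'' P2 π)
          = hatL Q' Q'' P2 (promP Q' Q'' P2 (π.symm (bE Q' Q'' P2)) π))) := by
  have hO := coverRemoval_Pord Q' Q'' P2
  have hcov := Pord_le_of_aE_lt Q' Q'' P2
  have hcomp := symmGen_Pord_aE Q' Q'' P2
  exact ⟨hO.isLinExt'_iff_exists, hO.card_isLinExt', fun π hπ =>
    ⟨fun κ hκ => hO.edges_of_lt_a hcov hcomp hπ hκ,
      fun κ h1 h2 => hO.edges_of_not_le hcomp hπ h1 h2,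
      hO.edges_a hcov hπ, hO.edges_b hπ⟩⟩

end PromoMC
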